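/- In the amplitude-damping setup of the context, α₁ = C(N,K) · ∑_{k=0}^{K} C(K,k) · C(N−K, K−k) · (r² + (1−r)²)^k · r^{2(K−k)}, and α₂ is given by the same expression with r replaced by 1−r: α₂ = C(N,K) · ∑_{k=0}^{K} C(K,k) · C(N−K, K−k) · (r² + (1−r)²)^k · (1−r)^{2(K−k)}. (Here binomial coefficients C(n,k) with k > n are zero.) -/
import Mathlib


open Matrix Finset

/-- Amplitude-damping Kraus operator K₁ = |−⟩⟨−| + √(1−r)|+⟩⟨+| on C², where the
basis index 0 is |−⟩ and 1 is |+⟩. -/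
noncomputable def ampK1 (r : ℝ) : Matrix (Fin 2) (Fin 2) ℂ :=
  !![1, 0; 0, (Real.sqrt (1 - r) : ℂ)]

/-- Amplitude-damping Kraus operator K₂ = √r |−⟩⟨+|. -/
noncomputable def ampK2 (r : ℝ) : Matrix (Fin 2) (Fin 2) ℂ :=
  !![0, (Real.sqrt r : ℂ); 0, 0]

/-- The rescaled Pauli matrices σ₀ = (|+⟩⟨+|+|−⟩⟨−|)/√2, σ₁ = (|+⟩⟨−|+|−⟩⟨+|)/√2,
σ₂ = i(−|+⟩⟨−|+|−⟩⟨+|)/√2, σ₃ = (|+⟩⟨+|−|−⟩⟨−|)/√2, with basis index 0 = |−⟩, 1 = |+⟩. -/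
noncomputable def pauliR : Fin 4 → Matrix (Fin 2) (Fin 2) ℂ
  | 0 => ((Real.sqrt 2 : ℂ))⁻¹ • !![1, 0; 0, 1]
  | 1 => ((Real.sqrt 2 : ℂ))⁻¹ • !![0, 1; 1, 0]
  | 2 => ((Real.sqrt 2 : ℂ))⁻¹ • !![0, Complex.I; -Complex.I, 0]
  | 3 => ((Real.sqrt 2 : ℂ))⁻¹ • !![-1, 0; 0, 1]

/-- The single-qubit operators Q_a = ∑_{i=1,2} K_i† σ_a K_i for the
amplitude-damping channel. -/
noncomputable def ampQ (r : ℝ) (a : Fin 4) : Matrix (Fin 2) (Fin 2) ℂ :=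
  (ampK1 r)ᴴ * pauliR a * ampK1 r + (ampK2 r)ᴴ * pauliR a * ampK2 r

/-- The N-qubit operator Q_μ = ⊗_{n=1}^N Q_{μ(n)} (N-fold Kronecker product). -/
noncomputable def ampQN (r : ℝ) (N : ℕ) (μ : Fin N → Fin 4) :
    Matrix (Fin N → Fin 2) (Fin N → Fin 2) ℂ :=
  Matrix.of fun x y => ∏ n, ampQ r (μ n) (x n) (y n)

/-- The orthogonal projection onto the energy shell: the span of the standard
tensor-product basis vectors having exactly K factors equal to |+⟩. -/
noncomputable def shellP (N Kp : ℕ) : Matrix (Fin N → Fin 2) (Fin N → Fin 2) ℂ :=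
  Matrix.of fun x y =>
    if x = y ∧ (Finset.univ.filter fun n => x n = 1).card = Kp then 1 else 0

/-- R_μ = P Q_μ P for the amplitude-damping setup. -/
noncomputable def ampR (r : ℝ) (N Kp : ℕ) (μ : Fin N → Fin 4) :
    Matrix (Fin N → Fin 2) (Fin N → Fin 2) ℂ :=
  shellP N Kp * ampQN r N μ * shellP N Kp

/-- Real part of the trace. -/
noncomputable def rtr {α : Type} [Fintype α] (M : Matrix α α ℂ) : ℝ :=
  (Matrix.trace M).re


/-! ### Auxiliary material -/

lemma sq1r (r : ℝ) (h : r ≤ 1) :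
    ((Real.sqrt (1-r) : ℝ) : ℂ) ^ 2 = ((1 - r : ℝ) : ℂ) := by
  rw [sq, ← Complex.ofReal_mul, Real.mul_self_sqrt (by linarith)]

lemma sqr (r : ℝ) (h : 0 ≤ r) :
    ((Real.sqrt r : ℝ) : ℂ) ^ 2 = ((r : ℝ) : ℂ) := by
  rw [sq, ← Complex.ofReal_mul, Real.mul_self_sqrt h]

lemma sq2c : ((Real.sqrt 2 : ℝ) : ℂ) ^ 2 = 2 := by
  rw [sq, ← Complex.ofReal_mul, Real.mul_self_sqrt (by norm_num)]
  norm_num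

lemma invsq2c : ((Real.sqrt 2 : ℝ) : ℂ)⁻¹ ^ 2 = 2⁻¹ := by rw [inv_pow, sq2c]

lemma inv2 : (Real.sqrt 2)⁻¹ * (Real.sqrt 2)⁻¹ = 2⁻¹ := by
  rw [← mul_inv, Real.mul_self_sqrt (by norm_num)]

/-- The per-site weight function. -/
noncomputable def siteF (s t : ℝ) : Fin 2 → Fin 2 → ℝ
  | 0, 0 => 1
  | 0, 1 => t
  | 1, 0 => t
  | 1, 1 => s

/-- Diagonal entries of the `ampQ` matrices, as real numbers. -/
noncomputable def ampqd (r : ℝ) : Fin 4 → Fin 2 → ℝ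
  | 0, _ => (Real.sqrt 2)⁻¹
  | 1, _ => 0
  | 2, _ => 0
  | 3, 0 => -(Real.sqrt 2)⁻¹
  | 3, 1 => (1 - 2*r) * (Real.sqrt 2)⁻¹

lemma ampQ0 (r : ℝ) (hr0 : 0 ≤ r) (hr1 : r ≤ 1) :
    ampQ r 0 = ((Real.sqrt 2 : ℂ))⁻¹ • !![1, 0; 0, 1] := by
  ext i j
  fin_cases i <;> fin_cases j <;>
    simp [ampQ, ampK1, ampK2, pauliR, Matrix.mul_apply, Fin.sum_univ_two,
      Matrix.conjTranspose_apply] <;>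
    ring_nf <;> rw [sq1r r hr1, sqr r hr0] <;> push_cast <;> ring

lemma ampQ1 (r : ℝ) (hr0 : 0 ≤ r) (hr1 : r ≤ 1) :
    ampQ r 1 = ((Real.sqrt 2 : ℂ))⁻¹ •
      !![0, (Real.sqrt (1-r) : ℂ); (Real.sqrt (1-r) : ℂ), 0] := by
  ext i j
  fin_cases i <;> fin_cases j <;>
    simp [ampQ, ampK1, ampK2, pauliR, Matrix.mul_apply, Fin.sum_univ_two,
      Matrix.conjTranspose_apply] <;>
    ring_nf <;> rw [sq1r r hr1, sqr r hr0] <;> push_cast <;> ring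

lemma ampQ2 (r : ℝ) (hr0 : 0 ≤ r) (hr1 : r ≤ 1) :
    ampQ r 2 = ((Real.sqrt 2 : ℂ))⁻¹ •
      !![0, (Real.sqrt (1-r) : ℂ) * Complex.I;
          -((Real.sqrt (1-r) : ℂ)) * Complex.I, 0] := by
  ext i j
  fin_cases i <;> fin_cases j <;>
    simp [ampQ, ampK1, ampK2, pauliR, Matrix.mul_apply, Fin.sum_univ_two,
      Matrix.conjTranspose_apply] <;>
    ring_nf <;> rw [sq1r r hr1, sqr r hr0] <;> push_cast <;> ring

lemma ampQ3 (r : ℝ) (hr0 : 0 ≤ r) (hr1 : r ≤ 1) :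
    ampQ r 3 = ((Real.sqrt 2 : ℂ))⁻¹ • !![-1, 0; 0, ((1 - 2*r : ℝ) : ℂ)] := by
  ext i j
  fin_cases i <;> fin_cases j <;>
    simp [ampQ, ampK1, ampK2, pauliR, Matrix.mul_apply, Fin.sum_univ_two,
      Matrix.conjTranspose_apply] <;>
    ring_nf <;> rw [sq1r r hr1, sqr r hr0] <;> push_cast <;> ring

lemma ampQ_diag (r : ℝ) (hr0 : 0 ≤ r) (hr1 : r ≤ 1) :
    ∀ (a : Fin 4) (i : Fin 2), ampQ r a i i = ((ampqd r a i : ℝ) : ℂ)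
  | 0, 0 => by rw [ampQ0 r hr0 hr1]; simp [ampqd]
  | 0, 1 => by rw [ampQ0 r hr0 hr1]; simp [ampqd]
  | 1, 0 => by rw [ampQ1 r hr0 hr1]; simp [ampqd]
  | 1, 1 => by rw [ampQ1 r hr0 hr1]; simp [ampqd]
  | 2, 0 => by rw [ampQ2 r hr0 hr1]; simp [ampqd]
  | 2, 1 => by rw [ampQ2 r hr0 hr1]; simp [ampqd]
  | 3, 0 => by rw [ampQ3 r hr0 hr1]; simp [ampqd]
  | 3, 1 => by rw [ampQ3 r hr0 hr1]; simp [ampqd]; push_cast; ring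

lemma site1 (r : ℝ) (i j : Fin 2) :
    ∑ a : Fin 4, ampqd r a i * ampqd r a j = siteF (r^2+(1-r)^2) r i j := by
  fin_cases i <;> fin_cases j <;> simp [Fin.sum_univ_four, ampqd, siteF]
  · linear_combination 2 * inv2
  · linear_combination (2*r) * inv2
  · linear_combination (2*r) * inv2
  · linear_combination (2 - 4*r + 4*r^2) * inv2

lemma site2 (r : ℝ) (hr0 : 0 ≤ r) (hr1 : r ≤ 1) (i j : Fin 2) :
    ∑ a : Fin 4, ampQ r a i j * ampQ r a j i
      = ((siteF (r^2+(1-r)^2) (1-r) i j : ℝ) : ℂ) := by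
  rw [Fin.sum_univ_four, ampQ0 r hr0 hr1, ampQ1 r hr0 hr1, ampQ2 r hr0 hr1,
    ampQ3 r hr0 hr1]
  fin_cases i <;> fin_cases j <;>
    simp only [siteF] <;>
    push_cast <;>
    simp [Matrix.smul_apply, Matrix.mul_apply] <;>
    ring_nf <;>
    simp only [invsq2c, Complex.I_sq, sq1r r hr1] <;>
    push_cast <;>
    ring

/-! ### Combinatorics -/

lemma count_inter (N Kp k : ℕ) (A : Finset (Fin N)) (hA : A.card = Kp) :
    (((powersetCard Kp (univ : Finset (Fin N)))).filter fun B => (A ∩ B).card = k).card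
      = Kp.choose k * (N - Kp).choose (Kp - k) := by
  have key : (((powersetCard Kp (univ : Finset (Fin N)))).filter
      fun B => (A ∩ B).card = k).card
      = ((powersetCard k A) ×ˢ (powersetCard (Kp - k) Aᶜ)).card := by
    apply Finset.card_bij' (fun B _ => (A ∩ B, B \ A))
      (fun p _ => p.1 ∪ p.2)
    · intro B hB
      simp only [mem_filter, mem_powersetCard_univ] at hB
      obtain ⟨hBc, hABk⟩ := hB
      have hkK : k ≤ Kp := by
        rw [← hABk, ← hBc]; exact card_le_card (inter_subset_right)
      simp only [mem_product, mem_powersetCard]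
      refine ⟨⟨inter_subset_left, hABk⟩, ?_, ?_⟩
      · intro x hx; simp only [mem_compl]; exact fun hxA => (mem_sdiff.mp hx).2 hxA
      · have h1 : (B ∩ A).card + (B \ A).card = B.card := card_inter_add_card_sdiff B A
        rw [inter_comm] at h1
        omega
    · intro p hp
      simp only [mem_product, mem_powersetCard] at hp
      obtain ⟨⟨hCA, hCk⟩, hDA, hDk⟩ := hp
      have hkK : k ≤ Kp := by rw [← hCk, ← hA]; exact card_le_card hCA
      have hdisj : Disjoint p.1 p.2 := by
        apply Finset.disjoint_left.mpr
        intro x hx1 hx2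
        exact (mem_compl.mp (hDA hx2)) (hCA hx1)
      have hAD : A ∩ p.2 = ∅ := by
        apply Finset.eq_empty_of_forall_notMem
        intro x hx
        exact (mem_compl.mp (hDA (mem_inter.mp hx).2)) (mem_inter.mp hx).1
      simp only [mem_filter, mem_powersetCard_univ]
      constructor
      · rw [card_union_of_disjoint hdisj, hCk, hDk]; omega
      · rw [inter_union_distrib_left, inter_eq_right.mpr hCA, hAD, union_empty, hCk]
    · intro B hB
      simp only
      rw [union_comm, inter_comm, sdiff_union_inter]
    · intro p hp
      simp only [mem_product, mem_powersetCard] at hp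
      obtain ⟨⟨hCA, _⟩, hDA, _⟩ := hp
      have hAD : A ∩ p.2 = ∅ := by
        apply Finset.eq_empty_of_forall_notMem
        intro x hx
        exact (mem_compl.mp (hDA (mem_inter.mp hx).2)) (mem_inter.mp hx).1
      have h1 : A ∩ (p.1 ∪ p.2) = p.1 := by
        rw [inter_union_distrib_left, inter_eq_right.mpr hCA, hAD, union_empty]
      have h2 : (p.1 ∪ p.2) \ A = p.2 := by
        ext x
        simp only [mem_sdiff, mem_union]
        constructor
        · rintro ⟨h | h, hxA⟩
          · exact absurd (hCA h) hxA
          · exact h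
        · intro h
          exact ⟨Or.inr h, mem_compl.mp (hDA h)⟩
      rw [h1, h2]
  rw [key, card_product, card_powersetCard, card_powersetCard, hA, card_compl, hA,
    Fintype.card_fin]

lemma siteF_eq (s t : ℝ) (i j : Fin 2) :
    siteF s t i j = s ^ (if i = 1 ∧ j = 1 then 1 else 0) *
      t ^ ((if i = 1 ∧ ¬ j = 1 then 1 else 0) + (if ¬ i = 1 ∧ j = 1 then 1 else 0)) := by
  fin_cases i <;> fin_cases j <;> simp [siteF]

lemma prodF (N : ℕ) (s t : ℝ) (x y : Fin N → Fin 2) :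
    ∏ n, siteF s t (x n) (y n) =
      s ^ (((univ.filter fun n => x n = 1) ∩ (univ.filter fun n => y n = 1)).card) *
      t ^ ((((univ.filter fun n => x n = 1) \ (univ.filter fun n => y n = 1)).card)
          + (((univ.filter fun n => y n = 1) \ (univ.filter fun n => x n = 1)).card)) := by
  have h1 : ((univ.filter fun n => x n = 1) ∩ (univ.filter fun n => y n = 1))
      = univ.filter fun n => x n = 1 ∧ y n = 1 := by
    ext n; simp [mem_inter, and_assoc]
  have h2 : ((univ.filter fun n => x n = 1) \ (univ.filter fun n => y n = 1))
      = univ.filter fun n => x n = 1 ∧ ¬ y n = 1 := by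
    ext n; simp [mem_sdiff]
  have h3 : ((univ.filter fun n => y n = 1) \ (univ.filter fun n => x n = 1))
      = univ.filter fun n => ¬ x n = 1 ∧ y n = 1 := by
    ext n; simp [mem_sdiff, and_comm]
  rw [h1, h2, h3, card_filter, card_filter, card_filter]
  rw [Finset.prod_congr rfl (fun n _ => siteF_eq s t (x n) (y n)),
    Finset.prod_mul_distrib, Finset.prod_pow_eq_pow_sum, Finset.prod_pow_eq_pow_sum,
    Finset.sum_add_distrib]

lemma reindex (N Kp : ℕ) (g : Finset (Fin N) → ℝ) :
    ∑ x ∈ (univ : Finset (Fin N → Fin 2)).filter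
        (fun x => (univ.filter fun n => x n = 1).card = Kp),
      g (univ.filter fun n => x n = 1)
    = ∑ A ∈ powersetCard Kp (univ : Finset (Fin N)), g A := by
  have h01 : ∀ v : Fin 2, v ≠ 1 → v = 0 := by decide
  apply Finset.sum_nbij' (i := fun x => univ.filter fun n => x n = 1)
    (j := fun A n => if n ∈ A then 1 else 0)
  · intro x hx
    simp only [mem_filter, mem_univ, true_and] at hx
    simpa [mem_powersetCard_univ] using hx
  · intro A hA
    simp only [mem_powersetCard_univ] at hA
    simp only [mem_filter, mem_univ, true_and]
    rw [← hA]
    congr 1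
    ext n
    by_cases h : n ∈ A <;> simp [h]
  · intro x hx
    funext n
    by_cases h : x n = 1
    · simp [h]
    · simp [h, h01 _ h]
  · intro A hA
    ext n
    by_cases h : n ∈ A <;> simp [h]
  · intro x hx; rfl

lemma ampInnerSum (N Kp : ℕ) (s t : ℝ) (A : Finset (Fin N)) (hA : A.card = Kp) :
    ∑ B ∈ powersetCard Kp (univ : Finset (Fin N)),
      s ^ ((A ∩ B).card) * t ^ ((A \ B).card + (B \ A).card)
    = ∑ k ∈ range (Kp + 1),
        (Kp.choose k : ℝ) * ((N - Kp).choose (Kp - k) : ℝ) * s ^ k * t ^ (2 * (Kp - k)) := by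
  have hmaps : ∀ B ∈ powersetCard Kp (univ : Finset (Fin N)),
      (A ∩ B).card ∈ range (Kp + 1) := by
    intro B hB
    rw [mem_range]
    have : (A ∩ B).card ≤ Kp := hA ▸ card_le_card inter_subset_left
    omega
  rw [← Finset.sum_fiberwise_of_maps_to hmaps]
  apply Finset.sum_congr rfl
  intro k _
  have hcong : ∀ B ∈ (powersetCard Kp (univ : Finset (Fin N))).filter
      (fun B => (A ∩ B).card = k),
      s ^ ((A ∩ B).card) * t ^ ((A \ B).card + (B \ A).card) = s ^ k * t ^ (2 * (Kp - k)) := by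
    intro B hB
    simp only [mem_filter, mem_powersetCard_univ] at hB
    obtain ⟨hBc, hABk⟩ := hB
    have h1 : (A ∩ B).card + (A \ B).card = A.card := card_inter_add_card_sdiff A B
    have h2 : (B ∩ A).card + (B \ A).card = B.card := card_inter_add_card_sdiff B A
    rw [inter_comm] at h2
    have hd1 : (A \ B).card = Kp - k := by omega
    have hd2 : (B \ A).card = Kp - k := by omega
    rw [hABk, hd1, hd2, ← two_mul]
  rw [Finset.sum_congr rfl hcong, Finset.sum_const, count_inter N Kp k A hA, nsmul_eq_mul]
  push_cast
  ring

lemma comb (N Kp : ℕ) (s t : ℝ) :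
    ∑ x ∈ (univ : Finset (Fin N → Fin 2)).filter
        (fun x => (univ.filter fun n => x n = 1).card = Kp),
      ∑ y ∈ (univ : Finset (Fin N → Fin 2)).filter
        (fun y => (univ.filter fun n => y n = 1).card = Kp),
        ∏ n, siteF s t (x n) (y n)
    = (N.choose Kp : ℝ) * ∑ k ∈ range (Kp + 1),
        (Kp.choose k : ℝ) * ((N - Kp).choose (Kp - k) : ℝ) * s ^ k * t ^ (2 * (Kp - k)) := by
  rw [Finset.sum_congr rfl (fun x _ => Finset.sum_congr rfl (fun y _ => prodF N s t x y))]
  rw [reindex N Kp (fun A => ∑ y ∈ (univ : Finset (Fin N → Fin 2)).filter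
      (fun y => (univ.filter fun n => y n = 1).card = Kp),
      s ^ ((A ∩ (univ.filter fun n => y n = 1)).card) *
      t ^ (((A \ (univ.filter fun n => y n = 1)).card)
        + (((univ.filter fun n => y n = 1) \ A).card)))]
  have hstep : ∀ A ∈ powersetCard Kp (univ : Finset (Fin N)),
      (∑ y ∈ (univ : Finset (Fin N → Fin 2)).filter
        (fun y => (univ.filter fun n => y n = 1).card = Kp),
        s ^ ((A ∩ (univ.filter fun n => y n = 1)).card) *
        t ^ (((A \ (univ.filter fun n => y n = 1)).card)
          + (((univ.filter fun n => y n = 1) \ A).card)))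
      = ∑ k ∈ range (Kp + 1),
        (Kp.choose k : ℝ) * ((N - Kp).choose (Kp - k) : ℝ) * s ^ k * t ^ (2 * (Kp - k)) := by
    intro A hA
    rw [reindex N Kp (fun B => s ^ ((A ∩ B).card) * t ^ ((A \ B).card + (B \ A).card))]
    exact ampInnerSum N Kp s t A (mem_powersetCard_univ.mp hA)
  rw [Finset.sum_congr rfl hstep, Finset.sum_const, card_powersetCard, card_univ,
    Fintype.card_fin, nsmul_eq_mul]

/-! ### Trace reduction -/

lemma shellP_diag (N Kp : ℕ) :
    shellP N Kp = Matrix.diagonal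
      (fun x : Fin N → Fin 2 =>
        if (univ.filter fun n => x n = 1).card = Kp then (1:ℂ) else 0) := by
  ext x y
  by_cases h : x = y
  · subst h; simp [shellP, Matrix.diagonal_apply_eq]
  · simp [shellP, Matrix.diagonal_apply_ne _ h, h]

lemma ampR_apply (r : ℝ) (N Kp : ℕ) (μ : Fin N → Fin 4) (x y : Fin N → Fin 2) :
    ampR r N Kp μ x y =
      (if (univ.filter fun n => x n = 1).card = Kp then (1:ℂ) else 0) *
      (∏ n, ampQ r (μ n) (x n) (y n)) *
      (if (univ.filter fun n => y n = 1).card = Kp then (1:ℂ) else 0) := by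
  rw [ampR, shellP_diag]
  rw [Matrix.mul_diagonal, Matrix.diagonal_mul]
  rfl

lemma trace1 (r : ℝ) (N Kp : ℕ) (μ : Fin N → Fin 4) :
    Matrix.trace (ampR r N Kp μ) =
      ∑ x ∈ (univ : Finset (Fin N → Fin 2)).filter
        (fun x => (univ.filter fun n => x n = 1).card = Kp),
        ∏ n, ampQ r (μ n) (x n) (x n) := by
  rw [Matrix.trace, Finset.sum_filter]
  apply Finset.sum_congr rfl
  intro x _
  show ampR r N Kp μ x x = _
  rw [ampR_apply]
  by_cases h : (univ.filter fun n => x n = 1).card = Kp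
  · simp [h]
  · simp [h]

lemma trace2 (r : ℝ) (N Kp : ℕ) (μ : Fin N → Fin 4) :
    Matrix.trace (ampR r N Kp μ * ampR r N Kp μ) =
      ∑ x ∈ (univ : Finset (Fin N → Fin 2)).filter
        (fun x => (univ.filter fun n => x n = 1).card = Kp),
      ∑ y ∈ (univ : Finset (Fin N → Fin 2)).filter
        (fun y => (univ.filter fun n => y n = 1).card = Kp),
        (∏ n, ampQ r (μ n) (x n) (y n)) * (∏ n, ampQ r (μ n) (y n) (x n)) := by
  have h : ∀ x y : Fin N → Fin 2,
      ampR r N Kp μ x y * ampR r N Kp μ y x =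
      (if (univ.filter fun n => x n = 1).card = Kp then
        (if (univ.filter fun n => y n = 1).card = Kp then
          (∏ n, ampQ r (μ n) (x n) (y n)) * (∏ n, ampQ r (μ n) (y n) (x n)) else 0)
        else 0) := by
    intro x y
    rw [ampR_apply, ampR_apply]
    by_cases hx : (univ.filter fun n => x n = 1).card = Kp <;>
      by_cases hy : (univ.filter fun n => y n = 1).card = Kp <;>
      simp [hx, hy] <;> ring
  rw [Matrix.trace]
  calc ∑ x, (ampR r N Kp μ * ampR r N Kp μ).diag x
      = ∑ x : Fin N → Fin 2,
          if (univ.filter fun n => x n = 1).card = Kp then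
            (∑ y : Fin N → Fin 2,
              if (univ.filter fun n => y n = 1).card = Kp then
                (∏ n, ampQ r (μ n) (x n) (y n)) * (∏ n, ampQ r (μ n) (y n) (x n))
              else 0)
          else 0 := by
        apply Finset.sum_congr rfl
        intro x _
        show ∑ y, ampR r N Kp μ x y * ampR r N Kp μ y x = _
        rw [Finset.sum_congr rfl (fun y _ => h x y)]
        by_cases hx : (univ.filter fun n => x n = 1).card = Kp
        · simp [hx]
        · simp [hx]
    _ = _ := by
        rw [← Finset.sum_filter]
        apply Finset.sum_congr rfl
        intro x _
        rw [← Finset.sum_filter]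

lemma sum_pi_prod {M : Type*} [CommSemiring M] (N : ℕ) (h : Fin N → Fin 4 → M) :
    ∑ μ : Fin N → Fin 4, ∏ n, h n (μ n) = ∏ n, ∑ a : Fin 4, h n a := by
  rw [Finset.prod_univ_sum]
  rw [Fintype.piFinset_univ]

/-- In the amplitude-damping setup, α₁ = C(N,K) ∑_{k=0}^K C(K,k) C(N−K,K−k)
(r²+(1−r)²)^k r^{2(K−k)}, and α₂ is the same expression with r replaced by 1−r. -/
theorem amp_alpha_formulas (r : ℝ) (hr0 : 0 ≤ r) (hr1 : r ≤ 1)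
    (N Kp : ℕ) (hN : 1 ≤ N) (hK : Kp ≤ N) :
    (∑ μ : Fin N → Fin 4, (rtr (ampR r N Kp μ)) ^ 2) =
        (N.choose Kp : ℝ) * ∑ k ∈ Finset.range (Kp + 1),
          (Kp.choose k : ℝ) * ((N - Kp).choose (Kp - k) : ℝ) *
            (r ^ 2 + (1 - r) ^ 2) ^ k * r ^ (2 * (Kp - k)) ∧
      (∑ μ : Fin N → Fin 4, rtr (ampR r N Kp μ * ampR r N Kp μ)) =
        (N.choose Kp : ℝ) * ∑ k ∈ Finset.range (Kp + 1),
          (Kp.choose k : ℝ) * ((N - Kp).choose (Kp - k) : ℝ) *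
            (r ^ 2 + (1 - r) ^ 2) ^ k * (1 - r) ^ (2 * (Kp - k)) := by

  have hrtr : ∀ μ : Fin N → Fin 4, rtr (ampR r N Kp μ) =
      ∑ x ∈ (univ : Finset (Fin N → Fin 2)).filter
        (fun x => (univ.filter fun n => x n = 1).card = Kp),
        ∏ n, ampqd r (μ n) (x n) := by
    intro μ
    rw [rtr, trace1]
    have h : (∑ x ∈ (univ : Finset (Fin N → Fin 2)).filter
        (fun x => (univ.filter fun n => x n = 1).card = Kp),
        ∏ n, ampQ r (μ n) (x n) (x n))
        = (((∑ x ∈ (univ : Finset (Fin N → Fin 2)).filter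
        (fun x => (univ.filter fun n => x n = 1).card = Kp),
        ∏ n, ampqd r (μ n) (x n) : ℝ)) : ℂ) := by
      rw [Complex.ofReal_sum]
      refine Finset.sum_congr rfl fun x _ => ?_
      rw [Complex.ofReal_prod]
      exact Finset.prod_congr rfl fun n _ => ampQ_diag r hr0 hr1 _ _
    rw [h, Complex.ofReal_re]
  constructor
  · calc ∑ μ : Fin N → Fin 4, (rtr (ampR r N Kp μ)) ^ 2
        = ∑ μ : Fin N → Fin 4,
            ∑ x ∈ (univ : Finset (Fin N → Fin 2)).filter
              (fun x => (univ.filter fun n => x n = 1).card = Kp),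
            ∑ y ∈ (univ : Finset (Fin N → Fin 2)).filter
              (fun y => (univ.filter fun n => y n = 1).card = Kp),
            ∏ n, (ampqd r (μ n) (x n) * ampqd r (μ n) (y n)) := by
          refine Finset.sum_congr rfl fun μ _ => ?_
          rw [hrtr μ, sq, Finset.sum_mul_sum]
          exact Finset.sum_congr rfl fun x _ => Finset.sum_congr rfl fun y _ =>
            (Finset.prod_mul_distrib).symm
      _ = ∑ x ∈ (univ : Finset (Fin N → Fin 2)).filter
              (fun x => (univ.filter fun n => x n = 1).card = Kp),
          ∑ y ∈ (univ : Finset (Fin N → Fin 2)).filter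
              (fun y => (univ.filter fun n => y n = 1).card = Kp),
          ∑ μ : Fin N → Fin 4,
            ∏ n, (ampqd r (μ n) (x n) * ampqd r (μ n) (y n)) := by
          rw [Finset.sum_comm]
          exact Finset.sum_congr rfl fun x _ => Finset.sum_comm
      _ = ∑ x ∈ (univ : Finset (Fin N → Fin 2)).filter
              (fun x => (univ.filter fun n => x n = 1).card = Kp),
          ∑ y ∈ (univ : Finset (Fin N → Fin 2)).filter
              (fun y => (univ.filter fun n => y n = 1).card = Kp),
          ∏ n, siteF (r^2+(1-r)^2) r (x n) (y n) := by
          refine Finset.sum_congr rfl fun x _ => Finset.sum_congr rfl fun y _ => ?_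
          rw [sum_pi_prod N (fun n a => ampqd r a (x n) * ampqd r a (y n))]
          exact Finset.prod_congr rfl fun n _ => site1 r (x n) (y n)
      _ = _ := comb N Kp (r^2+(1-r)^2) r
  · have hre : ∑ μ : Fin N → Fin 4, rtr (ampR r N Kp μ * ampR r N Kp μ)
        = (∑ μ : Fin N → Fin 4, Matrix.trace (ampR r N Kp μ * ampR r N Kp μ)).re := by
      rw [Complex.re_sum]
      rfl
    rw [hre]
    have hc : (∑ μ : Fin N → Fin 4, Matrix.trace (ampR r N Kp μ * ampR r N Kp μ))
        = (((N.choose Kp : ℝ) * ∑ k ∈ Finset.range (Kp + 1),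
          (Kp.choose k : ℝ) * ((N - Kp).choose (Kp - k) : ℝ) *
            (r ^ 2 + (1 - r) ^ 2) ^ k * (1 - r) ^ (2 * (Kp - k)) : ℝ) : ℂ) := by
      calc ∑ μ : Fin N → Fin 4, Matrix.trace (ampR r N Kp μ * ampR r N Kp μ)
          = ∑ μ : Fin N → Fin 4,
              ∑ x ∈ (univ : Finset (Fin N → Fin 2)).filter
                (fun x => (univ.filter fun n => x n = 1).card = Kp),
              ∑ y ∈ (univ : Finset (Fin N → Fin 2)).filter
                (fun y => (univ.filter fun n => y n = 1).card = Kp),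
              ∏ n, (ampQ r (μ n) (x n) (y n) * ampQ r (μ n) (y n) (x n)) := by
            refine Finset.sum_congr rfl fun μ _ => ?_
            rw [trace2]
            exact Finset.sum_congr rfl fun x _ => Finset.sum_congr rfl fun y _ =>
              (Finset.prod_mul_distrib).symm
        _ = ∑ x ∈ (univ : Finset (Fin N → Fin 2)).filter
                (fun x => (univ.filter fun n => x n = 1).card = Kp),
            ∑ y ∈ (univ : Finset (Fin N → Fin 2)).filter
                (fun y => (univ.filter fun n => y n = 1).card = Kp),
            ∑ μ : Fin N → Fin 4,
              ∏ n, (ampQ r (μ n) (x n) (y n) * ampQ r (μ n) (y n) (x n)) := by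
            rw [Finset.sum_comm]
            exact Finset.sum_congr rfl fun x _ => Finset.sum_comm
        _ = ∑ x ∈ (univ : Finset (Fin N → Fin 2)).filter
                (fun x => (univ.filter fun n => x n = 1).card = Kp),
            ∑ y ∈ (univ : Finset (Fin N → Fin 2)).filter
                (fun y => (univ.filter fun n => y n = 1).card = Kp),
            (((∏ n, siteF (r^2+(1-r)^2) (1-r) (x n) (y n) : ℝ)) : ℂ) := by
            refine Finset.sum_congr rfl fun x _ => Finset.sum_congr rfl fun y _ => ?_
            rw [sum_pi_prod N (fun n a => ampQ r a (x n) (y n) * ampQ r a (y n) (x n)),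
              Complex.ofReal_prod]
            exact Finset.prod_congr rfl fun n _ => site2 r hr0 hr1 (x n) (y n)
        _ = _ := by
            rw [← comb N Kp (r^2+(1-r)^2) (1-r)]
            push_cast
            rfl
    rw [hc, Complex.ofReal_re]
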